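/- arXiv:math/0201284 — 4 statements merged into one kernel-verified Lean document; each statement's English description precedes it below -/
import Mathlib

section
/- Let k be a commutative ring, L a Lie algebra over k, B : L × L → k a symmetric invariant bilinear form, and D₁, D₂ : L → L two derivations of L. Then the bilinear map c(a,b) := B(D₁b, D₂a) − B(D₁a, D₂b) is a 2-cocycle on L with values in k: it is alternating (c(a,b) = −c(b,a) and c(a,a) = 0) and satisfies c([a,b],x) + c([x,a],b) + c([b,x],a) = 0 for all a, b, x ∈ L. -/
/-- For a symmetric invariant bilinear form `B` on a Lie algebra `L` over a
commutative ring `k` and two derivations `D₁, D₂` of `L`, the bilinear map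
`c(a,b) = B(D₁ b, D₂ a) − B(D₁ a, D₂ b)` is an alternating 2-cocycle on `L`
with values in `k`. -/
theorem two_cocycle_from_two_derivations
    (k : Type*) [CommRing k] (L : Type*) [LieRing L] [LieAlgebra k L]
    (B : L →ₗ[k] L →ₗ[k] k)
    (hBsymm : ∀ x y : L, B x y = B y x)
    (hBinv : ∀ x y z : L, B ⁅x, y⁆ z = B x ⁅y, z⁆)
    (D₁ D₂ : L →ₗ[k] L)
    (hD₁ : ∀ x y : L, D₁ ⁅x, y⁆ = ⁅D₁ x, y⁆ + ⁅x, D₁ y⁆)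
    (hD₂ : ∀ x y : L, D₂ ⁅x, y⁆ = ⁅D₂ x, y⁆ + ⁅x, D₂ y⁆)
    (c : L → L → k)
    (hc : ∀ a b : L, c a b = B (D₁ b) (D₂ a) - B (D₁ a) (D₂ b)) :
    (∀ a b : L, c a b = - c b a) ∧
    (∀ a : L, c a a = 0) ∧
    (∀ a b x : L, c ⁅a, b⁆ x + c ⁅x, a⁆ b + c ⁅b, x⁆ a = 0) := by

  have hcyc : ∀ u v w : L, B u ⁅v, w⁆ = B w ⁅u, v⁆ := fun u v w => by
    rw [← hBinv, hBsymm]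
  refine ⟨fun a b => by rw [hc, hc]; ring, fun a => by rw [hc]; ring, fun a b x => ?_⟩
  simp only [hc, hD₁, hD₂, map_add, LinearMap.add_apply, hBinv]
  linear_combination (norm := ring_nf) - hcyc a (D₁ b) (D₂ x) - hcyc (D₂ x) a (D₁ b)
    - hcyc x (D₁ a) (D₂ b) - hcyc (D₂ b) x (D₁ a)
    - hcyc b (D₁ x) (D₂ a) - hcyc (D₂ a) b (D₁ x)
end

section
/- Let A be a unital associative ℂ-algebra, with commutator [u,v] := uv − vu. Let L be a complex Lie algebra, σ : L → L a conjugate-linear involution with σ[a,b] = [σa, σb], and ⟨·,·⟩ : L × L → ℂ a sesquilinear form (conjugate-linear in the first argument, ℂ-linear in the second). Let Y_R, Y_L : L → L be ℂ-linear derivations of L. Suppose π : L → A and β* : L → A are ℂ-linear, β : L → A is conjugate-linear, and for all a, b, m, n ∈ L: [πa, πb] = π[a,b]; [πa, β*m] = β*([a,m]); [πa, βm] = β([σa, m]); [βm, β*n] = ⟨m,n⟩·1; [β*m, β*n] = 0; [βm, βn] = 0. Define L(a) := πa + β*(Y_R a) − β(Y_L(σa)). Then for all a, b ∈ L: [L(a),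 L(b)] = L([a,b]) + (⟨Y_L(σb), Y_R a⟩ − ⟨Y_L(σa), Y_R b⟩)·1. -/
/-!
Write `L(a) = π a + C a - D a` with `C = β* ∘ Y_R` and `D = β ∘ Y_L ∘ σ`. Because `Y_R`, `Y_L`
are derivations and `β*`, `β` intertwine the adjoint action with `ad ∘ π` (twisted by `σ` for
`β`), both `C` and `D` are 1-cocycles for `ad ∘ π`. Their images are abelian, so the only part of
`⁅L a, L b⁆` not accounted for by `L ⁅a, b⁆` is the cross term `⁅D b, C a⁆ - ⁅D a, C b⁆`, which the
canonical commutation relations turn into a multiple of `1`.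
-/

section LieCocycle

variable {L A : Type*} [LieRing L] [LieRing A]

def IsLieCocycle (P C : L → A) : Prop :=
  ∀ a b : L, ⁅P a, C b⁆ - ⁅P b, C a⁆ = C ⁅a, b⁆

theorem isLieCocycle_comp_derivation {P : L → A} {β : L →+ A} {τ Y : L → L}
    (hPβ : ∀ a m : L, ⁅P a, β m⁆ = β ⁅τ a, m⁆)
    (hτ : ∀ a b : L, τ ⁅a, b⁆ = ⁅τ a, τ b⁆)
    (hY : ∀ x y : L, Y ⁅x, y⁆ = ⁅Y x, y⁆ + ⁅x, Y y⁆) :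
    IsLieCocycle P (fun a => β (Y (τ a))) := by
  intro a b
  dsimp only
  rw [hPβ, hPβ, ← map_sub, hτ, hY, ← lie_skew (τ b), sub_neg_eq_add, add_comm]

theorem lie_add_sub_of_isLieCocycle {P C D : L → A}
    (hP : ∀ a b : L, ⁅P a, P b⁆ = P ⁅a, b⁆)
    (hC : IsLieCocycle P C) (hD : IsLieCocycle P D)
    (hCC : ∀ a b : L, ⁅C a, C b⁆ = 0) (hDD : ∀ a b : L, ⁅D a, D b⁆ = 0) (a b : L) :
    ⁅P a + C a - D a, P b + C b - D b⁆ =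
      P ⁅a, b⁆ + C ⁅a, b⁆ - D ⁅a, b⁆ + (⁅D b, C a⁆ - ⁅D a, C b⁆) := by
  rw [← hC a b, ← hD a b, ← hP a b]
  simp only [lie_add, lie_sub, add_lie, sub_lie, hCC, hDD]
  rw [← lie_skew (C a) (P b), ← lie_skew (D a) (P b), ← lie_skew (C a) (D b)]
  abel

end LieCocycle

theorem fock_operators_central_extension_general
    (A : Type*) [Ring A] [Algebra ℂ A]
    (L : Type*) [LieRing L] [LieAlgebra ℂ L]
    (σ : L →ₛₗ[starRingEnd ℂ] L)
    (hσlie : ∀ a b : L, σ ⁅a, b⁆ = ⁅σ a, σ b⁆)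
    (S : L →ₛₗ[starRingEnd ℂ] L →ₗ[ℂ] ℂ)
    (Y_R Y_L : L →ₗ[ℂ] L)
    (hYR : ∀ x y : L, Y_R ⁅x, y⁆ = ⁅Y_R x, y⁆ + ⁅x, Y_R y⁆)
    (hYL : ∀ x y : L, Y_L ⁅x, y⁆ = ⁅Y_L x, y⁆ + ⁅x, Y_L y⁆)
    (π : L →ₗ[ℂ] A) (βc : L →ₗ[ℂ] A) (βa : L →ₛₗ[starRingEnd ℂ] A)
    (hππ : ∀ a b : L, ⁅π a, π b⁆ = π ⁅a, b⁆)
    (hπβc : ∀ a m : L, ⁅π a, βc m⁆ = βc ⁅a, m⁆)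
    (hπβa : ∀ a m : L, ⁅π a, βa m⁆ = βa ⁅σ a, m⁆)
    (hccr : ∀ m n : L, ⁅βa m, βc n⁆ = (S m n) • (1 : A))
    (hβcβc : ∀ m n : L, ⁅βc m, βc n⁆ = 0)
    (hβaβa : ∀ m n : L, ⁅βa m, βa n⁆ = 0)
    (Lop : L → A)
    (hLop : ∀ a : L, Lop a = π a + βc (Y_R a) - βa (Y_L (σ a))) :
    ∀ a b : L,
      ⁅Lop a, Lop b⁆ =
        Lop ⁅a, b⁆ + (S (Y_L (σ b)) (Y_R a) - S (Y_L (σ a)) (Y_R b)) • (1 : A) := by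
  intro a b
  let _ : LieRing A := LieRing.ofAssociativeRing
  have hC : IsLieCocycle π (fun a => βc (Y_R a)) :=
    isLieCocycle_comp_derivation (P := π) (β := βc.toAddMonoidHom) (τ := id) hπβc
      (fun _ _ => rfl) hYR
  have hD : IsLieCocycle π (fun a => βa (Y_L (σ a))) :=
    isLieCocycle_comp_derivation (β := βa.toAddMonoidHom) hπβa hσlie hYL
  rw [hLop, hLop, hLop, lie_add_sub_of_isLieCocycle hππ hC hD (fun _ _ => hβcβc _ _)
    (fun _ _ => hβaβa _ _), hccr, hccr, sub_smul]

/-- In a unital associative ℂ-algebra `A` (with commutator `⁅u,v⁆ = uv - vu`),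
given a complex Lie algebra `L`, a conjugate-linear involution `σ` of `L` preserving
brackets, a sesquilinear form `S` on `L`, two ℂ-linear derivations `Y_R, Y_L` of `L`,
and maps `π, β*, β` into `A` satisfying the stated commutation relations, the operators
`L(a) = π a + β*(Y_R a) − β(Y_L(σ a))` satisfy
`[L(a), L(b)] = L([a,b]) + (S(Y_L(σ b), Y_R a) − S(Y_L(σ a), Y_R b))·1`. -/
theorem fock_operators_central_extension
    (A : Type*) [Ring A] [Algebra ℂ A]
    (L : Type*) [LieRing L] [LieAlgebra ℂ L]
    (σ : L →ₛₗ[starRingEnd ℂ] L)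
    (hσinv : ∀ a : L, σ (σ a) = a)
    (hσlie : ∀ a b : L, σ ⁅a, b⁆ = ⁅σ a, σ b⁆)
    (S : L →ₛₗ[starRingEnd ℂ] L →ₗ[ℂ] ℂ)
    (Y_R Y_L : L →ₗ[ℂ] L)
    (hYR : ∀ x y : L, Y_R ⁅x, y⁆ = ⁅Y_R x, y⁆ + ⁅x, Y_R y⁆)
    (hYL : ∀ x y : L, Y_L ⁅x, y⁆ = ⁅Y_L x, y⁆ + ⁅x, Y_L y⁆)
    (π : L →ₗ[ℂ] A) (βc : L →ₗ[ℂ] A) (βa : L →ₛₗ[starRingEnd ℂ] A)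
    (hππ : ∀ a b : L, ⁅π a, π b⁆ = π ⁅a, b⁆)
    (hπβc : ∀ a m : L, ⁅π a, βc m⁆ = βc ⁅a, m⁆)
    (hπβa : ∀ a m : L, ⁅π a, βa m⁆ = βa ⁅σ a, m⁆)
    (hccr : ∀ m n : L, ⁅βa m, βc n⁆ = (S m n) • (1 : A))
    (hβcβc : ∀ m n : L, ⁅βc m, βc n⁆ = 0)
    (hβaβa : ∀ m n : L, ⁅βa m, βa n⁆ = 0)
    (Lop : L → A)
    (hLop : ∀ a : L, Lop a = π a + βc (Y_R a) - βa (Y_L (σ a))) :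
    ∀ a b : L,
      ⁅Lop a, Lop b⁆ =
        Lop ⁅a, b⁆ + (S (Y_L (σ b)) (Y_R a) - S (Y_L (σ a)) (Y_R b)) • (1 : A) :=
  fock_operators_central_extension_general A L σ hσlie S Y_R Y_L hYR hYL π βc βa hππ hπβc hπβa hccr
    hβcβc hβaβa Lop hLop
end

section
/- Let 𝔤₁, 𝔤₂ be ℤ-graded Lie algebras over ℂ, i.e. 𝔤ᵢ = ⊕_{n∈ℤ} 𝔤ᵢ(n) with [𝔤ᵢ(m), 𝔤ᵢ(n)] ⊆ 𝔤ᵢ(m+n). For i = 1, 2 let Mᵢ be a 𝔤ᵢ-module with a ℤ-grading Mᵢ = ⊕_{k∈ℤ} Mᵢ(k) that is compatible with the action (𝔤ᵢ(n)·Mᵢ(k) ⊆ Mᵢ(n+k)) and bounded above (there is Kᵢ with Mᵢ(k) = 0 for all k > Kᵢ). Assume M₁ and M₂ are simple and that every 𝔤ᵢ-module endomorphism of Mᵢ is multiplication by a scalar. Let D ⊆ 𝔤₁ × 𝔤₂ be a Lie subalgebra of the product Lie algebra such that: for every x ∈ 𝔤₁ and every N ∈ ℤ there exists y ∈ ⊕_{n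 ≥ N} 𝔤₂(n) with (x,y) ∈ D, and for every y ∈ 𝔤₂ and every N ∈ ℤ there exists x ∈ ⊕_{n ≥ N} 𝔤₁(n) with (x,y) ∈ D. Then M₁ ⊗ M₂, with the action (x,y)·(m⊗w) = (x·m)⊗w + m⊗(y·w), is a simple D-module. -/
/-!
Because the grading of `Mᵢ` is bounded above, every vector of `M₁ ⊗ M₂` is killed by the
homogeneous elements of `𝔤ᵢ` of large enough degree. Pairing `x ∈ 𝔤₁` with a partner of high
degree in `D` therefore shows that a `D`-stable subspace is stable under `𝔤₁` and `𝔤₂`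
separately. In coordinates along a basis of `M₂`, a nonzero vector of minimal support in such a
subspace is a pure tensor `m ⊗ w` by Schur's lemma, and the simplicity of `M₁` and `M₂` spreads
`m ⊗ w` over all of `M₁ ⊗ M₂`.
-/

open TensorProduct

attribute [local instance 100] LieRing.ofAssociativeRing

instance prodLieRing (L₁ L₂ : Type*) [LieRing L₁] [LieRing L₂] : LieRing (L₁ × L₂) where
  bracket x y := (⁅x.1, y.1⁆, ⁅x.2, y.2⁆)
  add_lie x y z := by simp [add_lie]
  lie_add x y z := by simp [lie_add]
  lie_self x := by simp
  leibniz_lie x y z := by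
    show ((⁅x.1, ⁅y.1, z.1⁆⁆ : L₁), (⁅x.2, ⁅y.2, z.2⁆⁆ : L₂)) =
      ((⁅⁅x.1, y.1⁆, z.1⁆, ⁅⁅x.2, y.2⁆, z.2⁆) : L₁ × L₂) +
      ((⁅y.1, ⁅x.1, z.1⁆⁆, ⁅y.2, ⁅x.2, z.2⁆⁆) : L₁ × L₂)
    rw [Prod.mk_add_mk]
    exact Prod.ext (leibniz_lie _ _ _) (leibniz_lie _ _ _)

instance prodLieAlgebra (R : Type*) [CommRing R] (L₁ L₂ : Type*) [LieRing L₁] [LieRing L₂]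
    [LieAlgebra R L₁] [LieAlgebra R L₂] : LieAlgebra R (L₁ × L₂) where
  lie_smul t x y := by
    show ((⁅x.1, t • y.1⁆ : L₁), (⁅x.2, t • y.2⁆ : L₂)) = t • ((⁅x.1, y.1⁆, ⁅x.2, y.2⁆) : L₁ × L₂)
    rw [Prod.smul_mk]
    exact Prod.ext (lie_smul _ _ _) (lie_smul _ _ _)

open Filter LieModule

theorem Finsupp.exists_mem_of_forall_mapRange_mem {R M ι : Type*} [Semiring R] [AddCommMonoid M]
    [Module R M] (S : Set (Module.End R M)) (N : Submodule R (ι →₀ M))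
    (hN : ∀ f ∈ S, ∀ v ∈ N, mapRange f f.map_zero v ∈ N) (hN₀ : N ≠ ⊥) :
    ∃ v ∈ N, ∃ i₀, v i₀ ≠ 0 ∧ ∀ f ∈ S, f (v i₀) = 0 → ∀ i, f (v i) = 0 := by
  -- Take `v` of minimal support: `f` applied to `v` kills the coordinate `i₀`, so it vanishes.
  obtain ⟨v, ⟨hvN, hv⟩, hmin⟩ := (measure fun v : ι →₀ M => v.support.card).wf.has_min
    {v | v ∈ N ∧ v ≠ 0} ((Submodule.ne_bot_iff N).mp hN₀)
  obtain ⟨i₀, hi₀⟩ := support_nonempty_iff.mpr hv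
  refine ⟨v, hvN, i₀, mem_support_iff.mp hi₀, fun f hf hfi₀ i => ?_⟩
  have hsub : (mapRange f f.map_zero v).support ⊂ v.support :=
    (Finset.ssubset_iff_of_subset support_mapRange).mpr ⟨i₀, hi₀, by simp [hfi₀]⟩
  by_contra hfi
  exact hmin _ ⟨hN f hf v hvN, fun h => hfi (by simpa using DFunLike.congr_fun h i)⟩
    (Finset.card_lt_card hsub)

theorem Submodule.apply_mem_of_exists_partner {R V L₁ L₂ : Type*} [CommSemiring R]
    [AddCommMonoid V] [Module R V] [AddCommMonoid L₂] [Module R L₂] {D : Set (L₁ × L₂)}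
    {G₂ : ℤ → Submodule R L₂} (φ₁ : L₁ → Module.End R V) (φ₂ : L₂ →ₗ[R] Module.End R V)
    {N : Submodule R V} (hN : ∀ d ∈ D, ∀ v ∈ N, φ₁ d.1 v + φ₂ d.2 v ∈ N)
    (hD : ∀ (x : L₁) (n₀ : ℤ), ∃ y : L₂, y ∈ (⨆ n : ℤ, ⨆ _ : n₀ ≤ n, G₂ n) ∧ (x, y) ∈ D)
    (hφ₂ : ∀ v, ∀ᶠ n in atTop, ∀ y ∈ G₂ n, φ₂ y v = 0) (x : L₁) {v : V} (hv : v ∈ N) :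
    φ₁ x v ∈ N := by
  obtain ⟨n₀, hn₀⟩ := eventually_atTop.mp (hφ₂ v)
  obtain ⟨y, hy, hxy⟩ := hD x n₀
  have hyv : φ₂ y v = 0 :=
    (iSup₂_le fun n hn y hy => hn₀ n hn y hy : _ ≤ LinearMap.ker (φ₂.flip v)) hy
  simpa [hyv] using hN _ hxy v hv

section TensorProduct

variable {R M₁ M₂ : Type*} [CommSemiring R] [AddCommMonoid M₁] [Module R M₁] [AddCommMonoid M₂]
  [Module R M₂]

theorem eventually_rTensor_apply_eq_zero {α ι : Type*} {l : Filter α} {s : α → Set ι}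
    {f : ι → Module.End R M₁} (h : ∀ m, ∀ᶠ a in l, ∀ x ∈ s a, f x m = 0) (v : M₁ ⊗[R] M₂) :
    ∀ᶠ a in l, ∀ x ∈ s a, (f x).rTensor M₂ v = 0 := by
  induction v using TensorProduct.induction_on with
  | zero => simp
  | tmul m w => filter_upwards [h m] with a ha x hx; simp [ha x hx]
  | add u v hu hv => filter_upwards [hu, hv] with a hua hva x hx; simp [hua x hx, hva x hx]

theorem eventually_lTensor_apply_eq_zero {α ι : Type*} {l : Filter α} {s : α → Set ι}
    {f : ι → Module.End R M₂} (h : ∀ w, ∀ᶠ a in l, ∀ y ∈ s a, f y w = 0) (v : M₁ ⊗[R] M₂) :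
    ∀ᶠ a in l, ∀ y ∈ s a, (f y).lTensor M₁ v = 0 := by
  induction v using TensorProduct.induction_on with
  | zero => simp
  | tmul m w => filter_upwards [h w] with a ha y hy; simp [ha y hy]
  | add u v hu hv => filter_upwards [hu, hv] with a hua hva y hy; simp [hua y hy, hva y hy]

theorem TensorProduct.equivFinsuppOfBasisRight_rTensor {ι : Type*} [DecidableEq ι]
    (b : Module.Basis ι R M₂) (f : Module.End R M₁) (v : M₁ ⊗[R] M₂) :
    equivFinsuppOfBasisRight b (f.rTensor M₂ v) =
      Finsupp.mapRange f f.map_zero (equivFinsuppOfBasisRight b v) := by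
  induction v using TensorProduct.induction_on with
  | zero => simp
  | tmul m w => ext i; simp
  | add u v hu hv => ext i; simp [hu, hv]

end TensorProduct

section LieRingModule

variable {R L M : Type*} [CommRing R] [LieRing L] [AddCommGroup M] [Module R M]
  [LieRingModule L M]

theorem Submodule.eq_top_of_lie_mem [IsIrreducible R L M] (p : Submodule R M)
    (hp : ∀ (x : L), ∀ m ∈ p, ⁅x, m⁆ ∈ p) (hp₀ : p ≠ ⊥) : p = ⊤ := by
  let q : LieSubmodule R L M := { p with lie_mem := hp _ _ }
  have hq : q ≠ ⊥ := fun h => hp₀ ((LieSubmodule.toSubmodule_eq_bot q).mpr h)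
  exact (LieSubmodule.toSubmodule_eq_top q).mpr
    ((IsSimpleOrder.eq_bot_or_eq_top q).resolve_left hq)

theorem LieModule.eventually_lie_eq_zero [Module R L] {G : ℤ → Submodule R L}
    {W : ℤ → Submodule R M} (hW : ⨆ k, W k = ⊤)
    (hGW : ∀ (n k : ℤ), ∀ x ∈ G n, ∀ m ∈ W k, ⁅x, m⁆ ∈ W (n + k))
    (hbdd : ∃ K : ℤ, ∀ k : ℤ, K < k → W k = ⊥) (m : M) :
    ∀ᶠ n in atTop, ∀ x ∈ G n, ⁅x, m⁆ = 0 := by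
  obtain ⟨K, hK⟩ := hbdd
  refine Submodule.iSup_induction W (motive := fun m => ∀ᶠ n in atTop, ∀ x ∈ G n, ⁅x, m⁆ = 0)
    (hW ▸ Submodule.mem_top) (fun k m hm => ?_) (by simp) (fun m m' hm hm' => ?_)
  · filter_upwards [eventually_gt_atTop (K - k)] with n hn x hx
    simpa [hK (n + k) (by omega)] using hGW n k x hx m hm
  · filter_upwards [hm, hm'] with n hn hn' x hx
    rw [lie_add, hn x hx, hn' x hx, add_zero]

end LieRingModule

namespace LieModule

variable {R L M M' : Type*} [CommRing R] [LieRing L] [LieAlgebra R L] [AddCommGroup M]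
  [Module R M] [LieRingModule L M] [LieModule R L M] [AddCommGroup M'] [Module R M']

variable (R L M) in
def actionSubalgebra : Subalgebra R (Module.End R M) :=
  Algebra.adjoin R (Set.range (toEnd R L M))

theorem toEnd_mem_actionSubalgebra (x : L) : toEnd R L M x ∈ actionSubalgebra R L M :=
  Algebra.subset_adjoin (Set.mem_range_self x)

theorem rTensor_mem_of_mem_actionSubalgebra {N : Submodule R (M ⊗[R] M')}
    (hN : ∀ (x : L), ∀ v ∈ N, (toEnd R L M x).rTensor M' v ∈ N) {f : Module.End R M}
    (hf : f ∈ actionSubalgebra R L M) : ∀ v ∈ N, f.rTensor M' v ∈ N := by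
  induction hf using Algebra.adjoin_induction with
  | mem f hf => obtain ⟨x, rfl⟩ := hf; exact hN x
  | algebraMap r => intro v hv; simpa [Module.algebraMap_end_eq_smul_id] using N.smul_mem r hv
  | add f g _ _ hf hg => intro v hv; simpa using N.add_mem (hf v hv) (hg v hv)
  | mul f g _ _ hf hg => intro v hv; rw [LinearMap.rTensor_mul]; exact hf _ (hg v hv)

theorem exists_mem_actionSubalgebra_apply_eq [IsIrreducible R L M] {m : M} (hm : m ≠ 0)
    (m' : M) : ∃ f ∈ actionSubalgebra R L M, f m = m' := by
  let p := (Subalgebra.toSubmodule (actionSubalgebra R L M)).map (LinearMap.applyₗ m)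
  have hp : ∀ (x : L), ∀ u ∈ p, ⁅x, u⁆ ∈ p := by
    rintro x _ ⟨f, hf, rfl⟩
    exact ⟨toEnd R L M x * f, Subalgebra.mul_mem _ (toEnd_mem_actionSubalgebra x) hf, rfl⟩
  have hp₀ : p ≠ ⊥ := (Submodule.ne_bot_iff p).mpr ⟨m, ⟨1, Subalgebra.one_mem _, rfl⟩, hm⟩
  obtain ⟨f, hf, rfl⟩ : m' ∈ p := Submodule.eq_top_of_lie_mem p hp hp₀ ▸ Submodule.mem_top
  exact ⟨f, hf, rfl⟩

theorem exists_eq_smul_of_forall_apply_eq_zero [IsIrreducible R L M]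
    (hSchur : ∀ φ : M →ₗ[R] M, (∀ (x : L) (m : M), φ ⁅x, m⁆ = ⁅x, φ m⁆) →
      ∃ c : R, ∀ m : M, φ m = c • m)
    {m₀ m : M} (hm₀ : m₀ ≠ 0) (h : ∀ f ∈ actionSubalgebra R L M, f m₀ = 0 → f m = 0) :
    ∃ c : R, m = c • m₀ := by
  let A := Subalgebra.toSubmodule (actionSubalgebra R L M)
  let ev (u : M) : A →ₗ[R] M := (LinearMap.applyₗ u).domRestrict A
  have hsurj : Function.Surjective (ev m₀) := fun u => by
    obtain ⟨f, hf, rfl⟩ := exists_mem_actionSubalgebra_apply_eq (R := R) (L := L) hm₀ u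
    exact ⟨⟨f, hf⟩, rfl⟩
  have hker : LinearMap.ker (ev m₀) ≤ LinearMap.ker (ev m) := fun f hf => h f f.2 hf
  -- `φ` is the well-defined map `f m₀ ↦ f m`; it commutes with the action, so it is a scalar.
  let φ : M →ₗ[R] M :=
    (LinearMap.ker (ev m₀)).liftQ (ev m) hker ∘ₗ ((ev m₀).quotKerEquivOfSurjective hsurj).symm
  have hφ (f : A) : φ (f.1 m₀) = f.1 m := by
    change (LinearMap.ker (ev m₀)).liftQ (ev m) hker
      (((ev m₀).quotKerEquivOfSurjective hsurj).symm (ev m₀ f)) = ev m f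
    rw [LinearMap.quotKerEquivOfSurjective_symm_apply]
    rfl
  have hφ_comm (x : L) (u : M) : φ ⁅x, u⁆ = ⁅x, φ u⁆ := by
    obtain ⟨f, rfl⟩ := hsurj u
    have hxf : toEnd R L M x * f.1 ∈ A := Subalgebra.mul_mem _ (toEnd_mem_actionSubalgebra x) f.2
    calc φ ⁅x, f.1 m₀⁆ = (toEnd R L M x * f.1) m := hφ ⟨_, hxf⟩
      _ = ⁅x, φ (f.1 m₀)⁆ := by rw [hφ f]; rfl
  obtain ⟨c, hc⟩ := hSchur φ hφ_comm
  exact ⟨c, (hφ ⟨1, Subalgebra.one_mem _⟩).symm.trans (hc m₀)⟩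

end LieModule

namespace LieModule

variable {K L₁ L₂ M₁ M₂ : Type*} [Field K] [LieRing L₁] [LieAlgebra K L₁] [LieRing L₂]
  [LieAlgebra K L₂] [AddCommGroup M₁] [Module K M₁] [LieRingModule L₁ M₁] [LieModule K L₁ M₁]
  [AddCommGroup M₂] [Module K M₂] [LieRingModule L₂ M₂] [LieModule K L₂ M₂]

theorem exists_tmul_mem_of_ne_bot [IsIrreducible K L₁ M₁]
    (hSchur : ∀ φ : M₁ →ₗ[K] M₁, (∀ (x : L₁) (m : M₁), φ ⁅x, m⁆ = ⁅x, φ m⁆) →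
      ∃ c : K, ∀ m : M₁, φ m = c • m)
    {N : Submodule K (M₁ ⊗[K] M₂)} (hN : ∀ (x : L₁), ∀ v ∈ N, (toEnd K L₁ M₁ x).rTensor M₂ v ∈ N)
    (hN₀ : N ≠ ⊥) : ∃ m ≠ 0, ∃ w ≠ 0, m ⊗ₜ[K] w ∈ N := by
  classical
  let b := Module.Basis.ofVectorSpace K M₂
  let ε := TensorProduct.equivFinsuppOfBasisRight (M := M₁) b
  obtain ⟨v, hvN, i₀, hvi₀, hv⟩ := Finsupp.exists_mem_of_forall_mapRange_mem
    (actionSubalgebra K L₁ M₁ : Set (Module.End K M₁)) (N.map ε.toLinearMap)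
    (by
      rintro f (hf : f ∈ actionSubalgebra K L₁ M₁) _ ⟨u, hu, rfl⟩
      refine ⟨_, rTensor_mem_of_mem_actionSubalgebra hN hf u hu, ?_⟩
      exact TensorProduct.equivFinsuppOfBasisRight_rTensor b f u)
    (by simpa using hN₀)
  choose c hc using fun i => exists_eq_smul_of_forall_apply_eq_zero hSchur hvi₀
    fun f hf hfi₀ => hv f hf hfi₀ i
  have hv_tmul : ε.symm v = v i₀ ⊗ₜ ∑ i ∈ v.support, c i • b i := by
    rw [TensorProduct.equivFinsuppOfBasisRight_symm_apply, Finsupp.sum, tmul_sum]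
    exact Finset.sum_congr rfl fun i _ => by rw [hc i, smul_tmul]
  refine ⟨v i₀, hvi₀, ∑ i ∈ v.support, c i • b i, fun hw => ?_, ?_⟩
  · rw [hw, tmul_zero, LinearEquiv.map_eq_zero_iff] at hv_tmul
    exact hvi₀ (by simp [hv_tmul])
  · obtain ⟨u, hu, rfl⟩ := hvN
    rw [← hv_tmul]
    simpa using hu

theorem eq_top_of_rTensor_mem_of_lTensor_mem [IsIrreducible K L₁ M₁] [IsIrreducible K L₂ M₂]
    (hSchur : ∀ φ : M₁ →ₗ[K] M₁, (∀ (x : L₁) (m : M₁), φ ⁅x, m⁆ = ⁅x, φ m⁆) →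
      ∃ c : K, ∀ m : M₁, φ m = c • m)
    {N : Submodule K (M₁ ⊗[K] M₂)}
    (hN₁ : ∀ (x : L₁), ∀ v ∈ N, (toEnd K L₁ M₁ x).rTensor M₂ v ∈ N)
    (hN₂ : ∀ (y : L₂), ∀ v ∈ N, (toEnd K L₂ M₂ y).lTensor M₁ v ∈ N) (hN₀ : N ≠ ⊥) : N = ⊤ := by
  obtain ⟨m₀, hm₀, w₀, hw₀, hmw⟩ := exists_tmul_mem_of_ne_bot hSchur hN₁ hN₀
  have h₁ : N.comap ((TensorProduct.mk K M₁ M₂).flip w₀) = ⊤ :=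
    Submodule.eq_top_of_lie_mem (L := L₁) _ (fun x m hm => by simpa using hN₁ x _ hm)
      ((Submodule.ne_bot_iff _).mpr ⟨m₀, hmw, hm₀⟩)
  have h₂ : ⨅ m, N.comap (TensorProduct.mk K M₁ M₂ m) = ⊤ :=
    Submodule.eq_top_of_lie_mem (L := L₂) _
      (fun y w hw => by
        simp only [Submodule.mem_iInf, Submodule.mem_comap, TensorProduct.mk_apply] at hw ⊢
        exact fun m => by simpa using hN₂ y _ (hw m))
      ((Submodule.ne_bot_iff _).mpr ⟨w₀, by simpa [Submodule.eq_top_iff'] using h₁, hw₀⟩)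
  rw [eq_top_iff, ← TensorProduct.span_tmul_eq_top, Submodule.span_le]
  rintro _ ⟨m, w, rfl⟩
  exact (Submodule.mem_iInf _).mp (h₂ ▸ Submodule.mem_top : w ∈ _) m

end LieModule

theorem tensor_product_simple_over_subalgebra_graded_general
    (𝔤₁ 𝔤₂ : Type*) [LieRing 𝔤₁] [LieAlgebra ℂ 𝔤₁] [LieRing 𝔤₂] [LieAlgebra ℂ 𝔤₂]
    (M₁ M₂ : Type*)
    [AddCommGroup M₁] [Module ℂ M₁] [LieRingModule 𝔤₁ M₁] [LieModule ℂ 𝔤₁ M₁]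
    [AddCommGroup M₂] [Module ℂ M₂] [LieRingModule 𝔤₂ M₂] [LieModule ℂ 𝔤₂ M₂]
    -- ℤ-gradings of the Lie algebras
    (G₁ : ℤ → Submodule ℂ 𝔤₁) (G₂ : ℤ → Submodule ℂ 𝔤₂)
    -- compatible ℤ-gradings of the modules, bounded above
    (W₁ : ℤ → Submodule ℂ M₁) (W₂ : ℤ → Submodule ℂ M₂)
    (hW₁ : DirectSum.IsInternal W₁) (hW₂ : DirectSum.IsInternal W₂)
    (hW₁compat : ∀ (n k : ℤ), ∀ x ∈ G₁ n, ∀ m ∈ W₁ k, ⁅x, m⁆ ∈ W₁ (n + k))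
    (hW₂compat : ∀ (n k : ℤ), ∀ y ∈ G₂ n, ∀ w ∈ W₂ k, ⁅y, w⁆ ∈ W₂ (n + k))
    (hW₁bdd : ∃ K₁ : ℤ, ∀ k : ℤ, K₁ < k → W₁ k = ⊥)
    (hW₂bdd : ∃ K₂ : ℤ, ∀ k : ℤ, K₂ < k → W₂ k = ⊥)
    -- `M₁` and `M₂` are simple, with scalar endomorphisms
    (hM₁simple : IsSimpleOrder (LieSubmodule ℂ 𝔤₁ M₁))
    (hM₂simple : IsSimpleOrder (LieSubmodule ℂ 𝔤₂ M₂))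
    (hSchur₁ : ∀ f : M₁ →ₗ[ℂ] M₁, (∀ (x : 𝔤₁) (m : M₁), f ⁅x, m⁆ = ⁅x, f m⁆) →
      ∃ c : ℂ, ∀ m : M₁, f m = c • m)
    -- the subalgebra `D` of the product Lie algebra
    (D : LieSubalgebra ℂ (𝔤₁ × 𝔤₂))
    (hD₁ : ∀ (x : 𝔤₁) (N : ℤ), ∃ y : 𝔤₂, y ∈ (⨆ n : ℤ, ⨆ _ : N ≤ n, G₂ n) ∧ (x, y) ∈ D)
    (hD₂ : ∀ (y : 𝔤₂) (N : ℤ), ∃ x : 𝔤₁, x ∈ (⨆ n : ℤ, ⨆ _ : N ≤ n, G₁ n) ∧ (x, y) ∈ D)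
    -- the action of `𝔤₁ × 𝔤₂` on `M₁ ⊗ M₂`
    (ρ : (𝔤₁ × 𝔤₂) →ₗ⁅ℂ⁆ Module.End ℂ (M₁ ⊗[ℂ] M₂))
    (hρ : ∀ (x : 𝔤₁) (y : 𝔤₂) (m : M₁) (w : M₂),
      ρ (x, y) (m ⊗ₜ[ℂ] w) = ⁅x, m⁆ ⊗ₜ[ℂ] w + m ⊗ₜ[ℂ] ⁅y, w⁆) :
    -- `M₁ ⊗ M₂` is a simple `D`-module
    ∀ N : Submodule ℂ (M₁ ⊗[ℂ] M₂),
      (∀ d ∈ D, ∀ v ∈ N, ρ d v ∈ N) → N = ⊥ ∨ N = ⊤ := by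
  intro N hN
  let φ₁ : 𝔤₁ →ₗ[ℂ] Module.End ℂ (M₁ ⊗[ℂ] M₂) := LinearMap.rTensorHom M₂ ∘ₗ toEnd ℂ 𝔤₁ M₁
  let φ₂ : 𝔤₂ →ₗ[ℂ] Module.End ℂ (M₁ ⊗[ℂ] M₂) := LinearMap.lTensorHom M₁ ∘ₗ toEnd ℂ 𝔤₂ M₂
  have hρ_split (x : 𝔤₁) (y : 𝔤₂) : ρ (x, y) = φ₁ x + φ₂ y :=
    TensorProduct.ext' fun m w => by simp [φ₁, φ₂, hρ]
  have hN' : ∀ d ∈ (D : Set (𝔤₁ × 𝔤₂)), ∀ v ∈ N, φ₁ d.1 v + φ₂ d.2 v ∈ N :=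
    fun ⟨x, y⟩ hd v hv => by simpa [hρ_split] using hN _ hd v hv
  have hvanish₁ (v) : ∀ᶠ n in atTop, ∀ x ∈ G₁ n, (toEnd ℂ 𝔤₁ M₁ x).rTensor M₂ v = 0 :=
    eventually_rTensor_apply_eq_zero (f := toEnd ℂ 𝔤₁ M₁)
      (eventually_lie_eq_zero hW₁.submodule_iSup_eq_top hW₁compat hW₁bdd) v
  have hvanish₂ (v) : ∀ᶠ n in atTop, ∀ y ∈ G₂ n, (toEnd ℂ 𝔤₂ M₂ y).lTensor M₁ v = 0 :=
    eventually_lTensor_apply_eq_zero (f := toEnd ℂ 𝔤₂ M₂)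
      (eventually_lie_eq_zero hW₂.submodule_iSup_eq_top hW₂compat hW₂bdd) v
  have hN₁ (x : 𝔤₁) (v) (hv : v ∈ N) : (toEnd ℂ 𝔤₁ M₁ x).rTensor M₂ v ∈ N :=
    Submodule.apply_mem_of_exists_partner φ₁ φ₂ hN' hD₁ hvanish₂ x hv
  have hN₂ (y : 𝔤₂) (v) (hv : v ∈ N) : (toEnd ℂ 𝔤₂ M₂ y).lTensor M₁ v ∈ N :=
    Submodule.apply_mem_of_exists_partner (D := Prod.swap ⁻¹' D) φ₂ φ₁
      (fun d hd v hv => add_comm (φ₁ d.2 v) _ ▸ hN' _ hd v hv) hD₂ hvanish₁ y hv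
  exact (eq_or_ne N ⊥).imp_right (eq_top_of_rTensor_mem_of_lTensor_mem hSchur₁ hN₁ hN₂)

/-- Let `𝔤₁, 𝔤₂` be ℤ-graded complex Lie algebras and `M₁, M₂` simple
ℤ-graded modules over them with gradings compatible with the action and bounded above,
and with all `𝔤ᵢ`-endomorphisms of `Mᵢ` scalar.  Let `D ⊆ 𝔤₁ × 𝔤₂` be a Lie subalgebra
such that every `x ∈ 𝔤₁` has, for every `N`, a partner `y ∈ ⊕_{n ≥ N} 𝔤₂(n)` with
`(x,y) ∈ D`, and symmetrically.  Then `M₁ ⊗ M₂`, with the action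
`(x,y)·(m⊗w) = (x·m)⊗w + m⊗(y·w)`, is a simple `D`-module. -/
theorem tensor_product_simple_over_subalgebra_graded
    (𝔤₁ 𝔤₂ : Type*) [LieRing 𝔤₁] [LieAlgebra ℂ 𝔤₁] [LieRing 𝔤₂] [LieAlgebra ℂ 𝔤₂]
    (M₁ M₂ : Type*)
    [AddCommGroup M₁] [Module ℂ M₁] [LieRingModule 𝔤₁ M₁] [LieModule ℂ 𝔤₁ M₁]
    [AddCommGroup M₂] [Module ℂ M₂] [LieRingModule 𝔤₂ M₂] [LieModule ℂ 𝔤₂ M₂]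
    -- ℤ-gradings of the Lie algebras
    (G₁ : ℤ → Submodule ℂ 𝔤₁) (G₂ : ℤ → Submodule ℂ 𝔤₂)
    (hG₁ : DirectSum.IsInternal G₁) (hG₂ : DirectSum.IsInternal G₂)
    (hG₁lie : ∀ (m n : ℤ), ∀ x ∈ G₁ m, ∀ y ∈ G₁ n, ⁅x, y⁆ ∈ G₁ (m + n))
    (hG₂lie : ∀ (m n : ℤ), ∀ x ∈ G₂ m, ∀ y ∈ G₂ n, ⁅x, y⁆ ∈ G₂ (m + n))
    -- compatible ℤ-gradings of the modules, bounded above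
    (W₁ : ℤ → Submodule ℂ M₁) (W₂ : ℤ → Submodule ℂ M₂)
    (hW₁ : DirectSum.IsInternal W₁) (hW₂ : DirectSum.IsInternal W₂)
    (hW₁compat : ∀ (n k : ℤ), ∀ x ∈ G₁ n, ∀ m ∈ W₁ k, ⁅x, m⁆ ∈ W₁ (n + k))
    (hW₂compat : ∀ (n k : ℤ), ∀ y ∈ G₂ n, ∀ w ∈ W₂ k, ⁅y, w⁆ ∈ W₂ (n + k))
    (hW₁bdd : ∃ K₁ : ℤ, ∀ k : ℤ, K₁ < k → W₁ k = ⊥)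
    (hW₂bdd : ∃ K₂ : ℤ, ∀ k : ℤ, K₂ < k → W₂ k = ⊥)
    -- `M₁` and `M₂` are simple, with scalar endomorphisms
    (hM₁simple : IsSimpleOrder (LieSubmodule ℂ 𝔤₁ M₁))
    (hM₂simple : IsSimpleOrder (LieSubmodule ℂ 𝔤₂ M₂))
    (hSchur₁ : ∀ f : M₁ →ₗ[ℂ] M₁, (∀ (x : 𝔤₁) (m : M₁), f ⁅x, m⁆ = ⁅x, f m⁆) →
      ∃ c : ℂ, ∀ m : M₁, f m = c • m)
    (hSchur₂ : ∀ f : M₂ →ₗ[ℂ] M₂, (∀ (y : 𝔤₂) (w : M₂), f ⁅y, w⁆ = ⁅y, f w⁆) →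
      ∃ c : ℂ, ∀ w : M₂, f w = c • w)
    -- the subalgebra `D` of the product Lie algebra
    (D : LieSubalgebra ℂ (𝔤₁ × 𝔤₂))
    (hD₁ : ∀ (x : 𝔤₁) (N : ℤ), ∃ y : 𝔤₂, y ∈ (⨆ n : ℤ, ⨆ _ : N ≤ n, G₂ n) ∧ (x, y) ∈ D)
    (hD₂ : ∀ (y : 𝔤₂) (N : ℤ), ∃ x : 𝔤₁, x ∈ (⨆ n : ℤ, ⨆ _ : N ≤ n, G₁ n) ∧ (x, y) ∈ D)
    -- the action of `𝔤₁ × 𝔤₂` on `M₁ ⊗ M₂`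
    (ρ : (𝔤₁ × 𝔤₂) →ₗ⁅ℂ⁆ Module.End ℂ (M₁ ⊗[ℂ] M₂))
    (hρ : ∀ (x : 𝔤₁) (y : 𝔤₂) (m : M₁) (w : M₂),
      ρ (x, y) (m ⊗ₜ[ℂ] w) = ⁅x, m⁆ ⊗ₜ[ℂ] w + m ⊗ₜ[ℂ] ⁅y, w⁆) :
    -- `M₁ ⊗ M₂` is a simple `D`-module
    ∀ N : Submodule ℂ (M₁ ⊗[ℂ] M₂),
      (∀ d ∈ D, ∀ v ∈ N, ρ d v ∈ N) → N = ⊥ ∨ N = ⊤ :=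
  tensor_product_simple_over_subalgebra_graded_general 𝔤₁ 𝔤₂ M₁ M₂ G₁ G₂ W₁ W₂ hW₁ hW₂ hW₁compat
    hW₂compat hW₁bdd hW₂bdd hM₁simple hM₂simple hSchur₁ D hD₁ hD₂ ρ hρ
end

section
/- For real parameters 0 < s < t < r define R₁(x) := x/√((x²−s²)(x²−t²)(r²−x²)) for x ∈ (t, r) and R₂(x) := x/√((x²−s²)(t²−x²)(r²−x²)) for x ∈ (s, t). Both functions are positive and integrable on their respective intervals, and for every positive rational number q there exist real numbers 0 < s < t < r such that ∫_t^r R₁(x) dx = q · ∫_s^t R₂(x) dx. -/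
open MeasureTheory

/-- `R₁(x) = x/√((x²−s²)(x²−t²)(r²−x²))`, the integrand of the `a₁`-period of the
holomorphic differential on the hyperelliptic surface, on the interval `(t, r)`. -/
noncomputable def R₁ (s t r x : ℝ) : ℝ :=
  x / Real.sqrt ((x ^ 2 - s ^ 2) * (x ^ 2 - t ^ 2) * (r ^ 2 - x ^ 2))

/-- `R₂(x) = x/√((x²−s²)(t²−x²)(r²−x²))`, the integrand of the `b₂`-period of the
holomorphic differential on the hyperelliptic surface, on the interval `(s, t)`. -/
noncomputable def R₂ (s t r x : ℝ) : ℝ :=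
  x / Real.sqrt ((x ^ 2 - s ^ 2) * (t ^ 2 - x ^ 2) * (r ^ 2 - x ^ 2))

/-!
The substitution `y = x²` followed by an affine one turns both periods into complete elliptic
integrals of the first kind: with `J = ellipticPeriod`, `J(m) = ∫₀¹ dv / √(v (1 - v) (1 - m v))` and
`m = (t² - s²) / (r² - s²)`,
`∫_t^r R₁ = J(1 - m) / (2 √(r² - s²))` and `∫_s^t R₂ = J(m) / (2 √(r² - s²))`.
By dominated convergence `J` is continuous on `(-∞, 1)`, and `J(1 - m) ≥ -log m`, so
`J(1 - m) - q J(m)` tends to `+∞` as `m → 0⁺` and, by the symmetry `m ↦ 1 - m`, to `-∞` as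
`m → 1⁻`. A zero `m` gives the branch points `1 < √(1 + m) < √2`.
-/

open Set Filter Topology Real

theorem hasDerivAt_arcsin_affine {a b x : ℝ} (hx : x ∈ Ioo a b) :
    HasDerivAt (fun x => arcsin ((2 * x - a - b) / (b - a))) (√((x - a) * (b - x)))⁻¹ x := by
  obtain ⟨hax, hxb⟩ := hx
  have hba : 0 < b - a := by linarith
  have hu : HasDerivAt (fun x => (2 * x - a - b) / (b - a)) (2 / (b - a)) x := by
    simpa using (((hasDerivAt_id x).const_mul 2).sub_const a |>.sub_const b).div_const (b - a)
  have h₁ : (2 * x - a - b) / (b - a) ≠ -1 := by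
    rw [ne_eq, div_eq_iff hba.ne']; linarith
  have h₂ : (2 * x - a - b) / (b - a) ≠ 1 := by
    rw [ne_eq, div_eq_iff hba.ne']; linarith
  refine ((hasDerivAt_arcsin h₁ h₂).comp x hu).congr_deriv ?_
  have hsq : 1 - ((2 * x - a - b) / (b - a)) ^ 2 = (2 / (b - a)) ^ 2 * ((x - a) * (b - x)) := by
    field_simp; ring
  rw [hsq, sqrt_mul (sq_nonneg _), sqrt_sq (by positivity)]
  have : 0 < √((x - a) * (b - x)) := sqrt_pos.2 (mul_pos (by linarith) (by linarith))
  field_simp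

theorem integrableOn_inv_sqrt_mul_sub (a b : ℝ) :
    IntegrableOn (fun x => (√((x - a) * (b - x)))⁻¹) (Ioo a b) :=
  (intervalIntegral.integrableOn_deriv_of_nonneg (by fun_prop)
    (fun x hx => hasDerivAt_arcsin_affine hx) (fun x _ => by positivity)).mono_set
    Ioo_subset_Ioc_self

theorem intervalIntegrable_of_abs_le_inv_sqrt {f : ℝ → ℝ} {a b C : ℝ} (hab : a < b)
    (hf : AEStronglyMeasurable f (volume.restrict (Ioo a b)))
    (hbound : ∀ x ∈ Ioo a b, |f x| ≤ C * (√((x - a) * (b - x)))⁻¹) :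
    IntervalIntegrable f volume a b := by
  rw [intervalIntegrable_iff_integrableOn_Ioo_of_le hab.le]
  exact ((integrableOn_inv_sqrt_mul_sub a b).const_mul C).mono' hf
    (ae_restrict_of_forall_mem measurableSet_Ioo hbound)

theorem integral_mul_comp_sq {a b : ℝ} (ha : 0 ≤ a) (hab : a ≤ b) (h : ℝ → ℝ) :
    ∫ x in a..b, x * h (x ^ 2) = (∫ y in a ^ 2..b ^ 2, h y) / 2 := by
  have hmono : StrictMonoOn (fun x : ℝ => x ^ 2) (Icc a b) :=
    (pow_left_strictMonoOn₀ two_ne_zero).mono fun x hx => ha.trans hx.1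
  have himage : (fun x : ℝ => x ^ 2) '' Icc a b = Icc (a ^ 2) (b ^ 2) :=
    (continuous_pow 2).continuousOn.image_Icc_of_monotoneOn hab hmono.monotoneOn
  have hcov := integral_image_eq_integral_abs_deriv_smul measurableSet_Icc
    (fun x _ => (hasDerivAt_pow 2 x).hasDerivWithinAt) hmono.injOn h
  rw [himage] at hcov
  rw [intervalIntegral.integral_of_le hab,
    intervalIntegral.integral_of_le (pow_le_pow_left₀ ha hab 2),
    ← integral_Icc_eq_integral_Ioc, ← integral_Icc_eq_integral_Ioc, hcov,
    eq_div_iff two_ne_zero, ← integral_mul_const]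
  refine setIntegral_congr_fun measurableSet_Icc fun x hx => ?_
  rw [abs_of_nonneg (by have := ha.trans hx.1; positivity), smul_eq_mul]
  ring

theorem div_sqrt_mul_le {x c Q K W : ℝ} (hx : 0 ≤ x) (hxc : x ≤ c) (hK : 0 < K) (hKW : K ≤ W) :
    x / √(Q * W) ≤ c / √K * (√Q)⁻¹ := by
  rw [sqrt_mul' Q (hK.le.trans hKW), div_mul_eq_div_div_swap, div_eq_mul_inv (x / √W)]
  gcongr
  exact hx.trans hxc

noncomputable def ellipticIntegrand (m v : ℝ) : ℝ := (√(v * (1 - v) * (1 - m * v)))⁻¹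

/-- Twice the complete elliptic integral of the first kind with parameter `m`: the substitution
`v = sin² θ` turns it into `2 ∫₀^{π/2} dθ / √(1 - m sin² θ) = 2 K(m)`. -/
noncomputable def ellipticPeriod (m : ℝ) : ℝ := ∫ v in (0:ℝ)..1, ellipticIntegrand m v

theorem integral_inv_sqrt_cubic_left {e₁ e₂ e₃ : ℝ} (h₁₂ : e₁ < e₂) (h₁₃ : e₁ < e₃) :
    ∫ y in e₁..e₂, (√((y - e₁) * (e₂ - y) * (e₃ - y)))⁻¹
      = ellipticPeriod ((e₂ - e₁) / (e₃ - e₁)) / √(e₃ - e₁) := by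
  set d := e₂ - e₁ with hd
  set D := e₃ - e₁ with hD
  have hd0 : 0 < d := sub_pos.2 h₁₂
  have hD0 : 0 < D := sub_pos.2 h₁₃
  have hsubst : ∀ v, (√(((d * v + e₁) - e₁) * (e₂ - (d * v + e₁)) * (e₃ - (d * v + e₁))))⁻¹
      = (d * √D)⁻¹ * ellipticIntegrand (d / D) v := by
    intro v
    rw [show ((d * v + e₁) - e₁) * (e₂ - (d * v + e₁)) * (e₃ - (d * v + e₁))
        = (d ^ 2 * D) * (v * (1 - v) * (1 - d / D * v)) by field_simp; ring,
      sqrt_mul (by positivity), sqrt_mul (sq_nonneg d), sqrt_sq hd0.le, mul_inv,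
      ellipticIntegrand]
  calc ∫ y in e₁..e₂, (√((y - e₁) * (e₂ - y) * (e₃ - y)))⁻¹
      = d * ∫ v in (0:ℝ)..1,
          (√(((d * v + e₁) - e₁) * (e₂ - (d * v + e₁)) * (e₃ - (d * v + e₁))))⁻¹ := by
        rw [← smul_eq_mul, intervalIntegral.smul_integral_comp_mul_add
          (fun y => (√((y - e₁) * (e₂ - y) * (e₃ - y)))⁻¹) d e₁]
        simp [hd]
    _ = ellipticPeriod (d / D) / √D := by
        simp_rw [hsubst, intervalIntegral.integral_const_mul, ellipticPeriod]
        field_simp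

theorem integral_inv_sqrt_cubic_right {e₁ e₂ e₃ : ℝ} (h₁₃ : e₁ < e₃) (h₂₃ : e₂ < e₃) :
    ∫ y in e₂..e₃, (√((y - e₁) * (y - e₂) * (e₃ - y)))⁻¹
      = ellipticPeriod ((e₃ - e₂) / (e₃ - e₁)) / √(e₃ - e₁) := by
  have hreflect := intervalIntegral.integral_comp_sub_left
    (fun y => (√((y - e₁) * (y - e₂) * (e₃ - y)))⁻¹) (a := e₁) (b := e₁ + e₃ - e₂) (e₁ + e₃)
  rw [show e₁ + e₃ - (e₁ + e₃ - e₂) = e₂ by ring, show e₁ + e₃ - e₁ = e₃ by ring] at hreflect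
  rw [← hreflect, ← show e₁ + e₃ - e₂ - e₁ = e₃ - e₂ by ring,
    ← integral_inv_sqrt_cubic_left (by linarith) h₁₃]
  congr 1 with y
  ring_nf

theorem ellipticIntegrand_nonneg (m v : ℝ) : 0 ≤ ellipticIntegrand m v := by
  unfold ellipticIntegrand; positivity

theorem ellipticIntegrand_one (m : ℝ) : ellipticIntegrand m 1 = 0 := by
  simp [ellipticIntegrand]

theorem ellipticIntegrand_le_of_le {m M v : ℝ} (hmM : m ≤ M) (hM : M ≤ 1) (hv : v ∈ Ioc 0 1) :
    ellipticIntegrand m v ≤ ellipticIntegrand M v := by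
  obtain ⟨hv0, hv1⟩ := hv
  rcases hv1.eq_or_lt with rfl | hv1
  · simp [ellipticIntegrand_one]
  have hpos : 0 < v * (1 - v) * (1 - M * v) := by
    apply mul_pos (mul_pos hv0 (by linarith)); nlinarith
  have := mul_nonneg (mul_pos hv0 (sub_pos.2 hv1)).le (mul_nonneg (sub_nonneg.2 hmM) hv0.le)
  exact inv_anti₀ (sqrt_pos.2 hpos) (sqrt_le_sqrt (by nlinarith))

theorem intervalIntegrable_ellipticIntegrand {m : ℝ} (hm : m < 1) :
    IntervalIntegrable (ellipticIntegrand m) volume 0 1 := by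
  have hc : 0 < 1 - max m 0 := by simp [hm]
  refine intervalIntegrable_of_abs_le_inv_sqrt (C := (√(1 - max m 0))⁻¹) one_pos
    (by unfold ellipticIntegrand; fun_prop) fun v ⟨hv0, hv1⟩ => ?_
  have hmv : 1 - max m 0 ≤ 1 - m * v := by
    rcases le_total m 0 with h | h
    · rw [max_eq_right h]; nlinarith
    · rw [max_eq_left h]; nlinarith
  rw [abs_of_nonneg (ellipticIntegrand_nonneg m v), ellipticIntegrand, sub_zero, ← mul_inv,
    ← sqrt_mul hc.le]
  exact inv_anti₀ (sqrt_pos.2 (by have := mul_pos hv0 (sub_pos.2 hv1); positivity))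
    (sqrt_le_sqrt (by nlinarith [mul_pos hv0 (sub_pos.2 hv1)]))

theorem continuousOn_ellipticPeriod : ContinuousOn ellipticPeriod (Iio 1) := by
  intro m₀ hm₀
  rw [mem_Iio] at hm₀
  have hΛ : (1 + m₀) / 2 < 1 := by linarith
  refine (intervalIntegral.continuousAt_of_dominated_interval
    (bound := ellipticIntegrand ((1 + m₀) / 2)) (Eventually.of_forall fun m => ?_) ?_
    (intervalIntegrable_ellipticIntegrand hΛ) (ae_of_all _ fun v hv => ?_)).continuousWithinAt
  · unfold ellipticIntegrand; fun_prop
  · filter_upwards [eventually_lt_nhds (show m₀ < (1 + m₀) / 2 by linarith)] with m hm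
    refine ae_of_all _ fun v hv => ?_
    rw [uIoc_of_le zero_le_one] at hv
    rw [norm_of_nonneg (ellipticIntegrand_nonneg m v)]
    exact ellipticIntegrand_le_of_le hm.le hΛ.le hv
  · rw [uIoc_of_le zero_le_one] at hv
    obtain ⟨hv0, hv1⟩ := hv
    rcases hv1.eq_or_lt with rfl | hv1
    · simp only [ellipticIntegrand_one]; exact continuousAt_const
    have hpos : 0 < v * (1 - v) * (1 - m₀ * v) := by
      apply mul_pos (mul_pos hv0 (by linarith)); nlinarith
    exact ContinuousAt.inv₀ (by fun_prop) (sqrt_pos.2 hpos).ne'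

theorem neg_log_le_ellipticPeriod_one_sub {m : ℝ} (hm : 0 < m) :
    -log m ≤ ellipticPeriod (1 - m) := by
  have hlower : ∀ v ∈ Ioo (0:ℝ) 1, (1 + m - v)⁻¹ ≤ ellipticIntegrand (1 - m) v := by
    intro v ⟨hv0, hv1⟩
    have hX : 0 < 1 - (1 - m) * v := by nlinarith
    have hvX : v * (1 - v) ≤ 1 - (1 - m) * v := by nlinarith
    have hXm : 1 - (1 - m) * v ≤ 1 + m - v := by nlinarith
    refine inv_anti₀ (sqrt_pos.2 (mul_pos (mul_pos hv0 (by linarith)) hX)) ?_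
    rw [← sqrt_sq (by linarith : 0 ≤ 1 + m - v)]
    exact sqrt_le_sqrt (by nlinarith [mul_le_mul_of_nonneg_right hvX hX.le])
  have hint : IntervalIntegrable (fun v => (1 + m - v)⁻¹) volume 0 1 :=
    (by fun_prop : Continuous fun v : ℝ => 1 + m - v).continuousOn.inv₀ (fun v hv => by
      rw [uIcc_of_le zero_le_one] at hv; linarith [hv.2]) |>.intervalIntegrable
  calc -log m ≤ log ((1 + m) / m) := by
        rw [← log_inv]
        refine log_le_log (by positivity) ?_
        rw [inv_eq_one_div]
        exact div_le_div_of_nonneg_right (by linarith) hm.le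
    _ = ∫ v in (0:ℝ)..1, (1 + m - v)⁻¹ := by
        rw [intervalIntegral.integral_comp_sub_left (fun y => y⁻¹), sub_zero,
          add_sub_cancel_left, integral_inv_of_pos hm (by linarith)]
    _ ≤ ellipticPeriod (1 - m) := intervalIntegral.integral_mono_on_of_le_Ioo zero_le_one hint
        (intervalIntegrable_ellipticIntegrand (by linarith)) hlower

theorem tendsto_ellipticPeriod_one_sub_sub_mul (c : ℝ) :
    Tendsto (fun m => ellipticPeriod (1 - m) - c * ellipticPeriod m) (𝓝[>] 0) atTop := by
  have hlog : Tendsto (fun m => ellipticPeriod (1 - m)) (𝓝[>] 0) atTop :=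
    tendsto_atTop_mono' _
      (eventually_nhdsWithin_of_forall fun m hm => neg_log_le_ellipticPeriod_one_sub hm)
      (tendsto_neg_atBot_atTop.comp tendsto_log_nhdsGT_zero)
  have hcont : Tendsto (fun m => -(c * ellipticPeriod m)) (𝓝[>] 0)
      (𝓝 (-(c * ellipticPeriod 0))) :=
    ((continuousOn_ellipticPeriod.continuousAt (Iio_mem_nhds one_pos)).tendsto.const_mul c).neg
      |>.mono_left nhdsWithin_le_nhds
  simpa [sub_eq_add_neg] using hlog.atTop_add hcont

theorem exists_ellipticPeriod_one_sub_eq_mul {q : ℝ} (hq : 0 < q) :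
    ∃ m ∈ Ioo 0 1, ellipticPeriod (1 - m) = q * ellipticPeriod m := by
  have : (𝓝[Ioo 0 1] (0:ℝ)).NeBot := left_nhdsWithin_Ioo_neBot one_pos
  have hl : 𝓝[Ioo 0 1] (0:ℝ) ≤ 𝓟 (Ioo 0 1) := le_principal_iff.2 self_mem_nhdsWithin
  have hflip : MapsTo (fun m : ℝ => 1 - m) (Ioo 0 1) (Ioo 0 1) := fun m ⟨h0, h1⟩ =>
    ⟨by linarith, by linarith⟩
  have hJ : ContinuousOn ellipticPeriod (Ioo 0 1) :=
    continuousOn_ellipticPeriod.mono fun m hm => hm.2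
  have hnear0 (c : ℝ) :
      ∀ᶠ m in 𝓝[Ioo 0 1] 0, c * ellipticPeriod m ≤ ellipticPeriod (1 - m) := by
    rw [nhdsWithin_Ioo_eq_nhdsGT one_pos]
    filter_upwards [(tendsto_ellipticPeriod_one_sub_sub_mul c).eventually_ge_atTop 0] with m hm
    linarith
  have hnear1 : ∀ᶠ m in map (fun m => 1 - m) (𝓝[Ioo 0 1] 0),
      ellipticPeriod (1 - m) ≤ q * ellipticPeriod m := by
    refine eventually_map.2 ((hnear0 q⁻¹).mono fun m hm => ?_)
    rwa [sub_sub_cancel, ← inv_mul_le_iff₀ hq]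
  obtain ⟨m, hm, h⟩ := isPreconnected_Ioo.intermediate_value₂_eventually₂ hl
    (tendsto_principal_principal.2 hflip |>.mono_left hl)
    (hJ.const_smul q) (hJ.comp (by fun_prop) hflip) (hnear0 q) hnear1
  exact ⟨m, hm, h.symm⟩

section Periods

variable {s t r x : ℝ}

theorem R₁_pos (hs : 0 ≤ s) (hst : s < t) (hx : x ∈ Ioo t r) : 0 < R₁ s t r x := by
  obtain ⟨htx, hxr⟩ := hx
  have : 0 < (x ^ 2 - s ^ 2) * (x ^ 2 - t ^ 2) * (r ^ 2 - x ^ 2) := by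
    apply mul_pos (mul_pos _ _) <;> nlinarith
  exact div_pos (by linarith) (sqrt_pos.2 this)

theorem R₂_pos (hs : 0 ≤ s) (htr : t < r) (hx : x ∈ Ioo s t) : 0 < R₂ s t r x := by
  obtain ⟨hsx, hxt⟩ := hx
  have : 0 < (x ^ 2 - s ^ 2) * (t ^ 2 - x ^ 2) * (r ^ 2 - x ^ 2) := by
    apply mul_pos (mul_pos _ _) <;> nlinarith
  exact div_pos (by linarith) (sqrt_pos.2 this)

theorem abs_R₁_le (hs : 0 ≤ s) (hst : s < t) (hx : x ∈ Ioo t r) :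
    |R₁ s t r x| ≤ r / √((t ^ 2 - s ^ 2) * (t + t) * (t + t)) * (√((x - t) * (r - x)))⁻¹ := by
  rw [abs_of_pos (R₁_pos hs hst hx), R₁,
    show (x ^ 2 - s ^ 2) * (x ^ 2 - t ^ 2) * (r ^ 2 - x ^ 2)
      = ((x - t) * (r - x)) * ((x ^ 2 - s ^ 2) * (x + t) * (r + x)) by ring]
  obtain ⟨htx, hxr⟩ := hx
  have hts : 0 < t ^ 2 - s ^ 2 := by nlinarith
  refine div_sqrt_mul_le (by linarith) hxr.le (mul_pos (mul_pos hts ?_) ?_) ?_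
  · linarith
  · linarith
  have hxs : t ^ 2 - s ^ 2 ≤ x ^ 2 - s ^ 2 := by nlinarith
  have hxt : 0 ≤ (x ^ 2 - s ^ 2) * (x + t) := mul_nonneg (by linarith) (by linarith)
  gcongr ?_ * ?_ * ?_ <;> linarith

theorem abs_R₂_le (hs : 0 < s) (htr : t < r) (hx : x ∈ Ioo s t) :
    |R₂ s t r x| ≤ t / √((s + s) * (s + s) * (r ^ 2 - t ^ 2)) * (√((x - s) * (t - x)))⁻¹ := by
  rw [abs_of_pos (R₂_pos hs.le htr hx), R₂,
    show (x ^ 2 - s ^ 2) * (t ^ 2 - x ^ 2) * (r ^ 2 - x ^ 2)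
      = ((x - s) * (t - x)) * ((x + s) * (t + x) * (r ^ 2 - x ^ 2)) by ring]
  obtain ⟨hsx, hxt⟩ := hx
  have hrt : 0 < r ^ 2 - t ^ 2 := by nlinarith
  refine div_sqrt_mul_le (by linarith) hxt.le (mul_pos (by positivity) hrt) ?_
  gcongr ?_ * ?_ * ?_ <;> nlinarith

theorem intervalIntegrable_R₁ (hs : 0 ≤ s) (hst : s < t) (htr : t < r) :
    IntervalIntegrable (R₁ s t r) volume t r :=
  intervalIntegrable_of_abs_le_inv_sqrt htr (by unfold R₁; fun_prop : Measurable _).aestronglyMeasurable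
    fun _ hx => abs_R₁_le hs hst hx

theorem intervalIntegrable_R₂ (hs : 0 < s) (hst : s < t) (htr : t < r) :
    IntervalIntegrable (R₂ s t r) volume s t :=
  intervalIntegrable_of_abs_le_inv_sqrt hst (by unfold R₂; fun_prop : Measurable _).aestronglyMeasurable
    fun _ hx => abs_R₂_le hs htr hx

theorem integral_R₁_eq (hs : 0 ≤ s) (hst : s < t) (htr : t < r) :
    ∫ x in t..r, R₁ s t r x
      = ellipticPeriod ((r ^ 2 - t ^ 2) / (r ^ 2 - s ^ 2)) / (2 * √(r ^ 2 - s ^ 2)) := by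
  have hsq := integral_mul_comp_sq (hs.trans hst.le) htr.le
    (fun y => (√((y - s ^ 2) * (y - t ^ 2) * (r ^ 2 - y)))⁻¹)
  simp only [← div_eq_mul_inv] at hsq
  unfold R₁
  rw [hsq, integral_inv_sqrt_cubic_right (by nlinarith) (by nlinarith)]
  ring

theorem integral_R₂_eq (hs : 0 ≤ s) (hst : s < t) (htr : t < r) :
    ∫ x in s..t, R₂ s t r x
      = ellipticPeriod ((t ^ 2 - s ^ 2) / (r ^ 2 - s ^ 2)) / (2 * √(r ^ 2 - s ^ 2)) := by
  have hsq := integral_mul_comp_sq hs hst.le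
    (fun y => (√((y - s ^ 2) * (t ^ 2 - y) * (r ^ 2 - y)))⁻¹)
  simp only [← div_eq_mul_inv] at hsq
  unfold R₂
  rw [hsq, integral_inv_sqrt_cubic_left (by nlinarith) (by nlinarith)]
  ring

end Periods

/-- For `0 < s < t < r`, the functions `R₁` and `R₂` are positive and
integrable on `(t, r)` and `(s, t)` respectively, and for every positive rational `q`
the branch points can be chosen so that `∫_t^r R₁ = q · ∫_s^t R₂`. -/
theorem hyperelliptic_periods_mutually_rational :
    (∀ s t r : ℝ, 0 < s → s < t → t < r →
      (∀ x ∈ Set.Ioo t r, 0 < R₁ s t r x) ∧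
      (∀ x ∈ Set.Ioo s t, 0 < R₂ s t r x) ∧
      IntervalIntegrable (R₁ s t r) volume t r ∧
      IntervalIntegrable (R₂ s t r) volume s t) ∧
    (∀ q : ℚ, 0 < q → ∃ s t r : ℝ, 0 < s ∧ s < t ∧ t < r ∧
      (∫ x in t..r, R₁ s t r x) = (q : ℝ) * ∫ x in s..t, R₂ s t r x) := by
  refine ⟨fun s t r hs hst htr => ⟨fun x => R₁_pos hs.le hst, fun x => R₂_pos hs.le htr,
    intervalIntegrable_R₁ hs.le hst htr, intervalIntegrable_R₂ hs hst htr⟩, fun q hq => ?_⟩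
  obtain ⟨m, ⟨hm0, hm1⟩, hm⟩ := exists_ellipticPeriod_one_sub_eq_mul (Rat.cast_pos.2 hq)
  have ht : √(1 + m) ^ 2 = 1 + m := sq_sqrt (by linarith)
  have hr : √2 ^ 2 = 2 := sq_sqrt zero_le_two
  have h1t : 1 < √(1 + m) := (lt_sqrt zero_le_one).2 (by linarith)
  have htr : √(1 + m) < √2 := sqrt_lt_sqrt (by linarith) (by linarith)
  refine ⟨1, √(1 + m), √2, one_pos, h1t, htr, ?_⟩
  rw [integral_R₁_eq zero_le_one h1t htr, integral_R₂_eq zero_le_one h1t htr, ht, hr,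
    show (2 - (1 + m)) / (2 - 1 ^ 2) = 1 - m by ring, show (1 + m - 1 ^ 2) / (2 - 1 ^ 2) = m by ring,
    hm]
  ring
end
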